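/- Let Π be a normal logic program and Φ its explicit version. For every atom b ∈ At(Π): (1) Π ⊨_WFS b iff Φ ⊨_WFS b, and (2) Π ⊣_WFS b iff Φ ⊣_WFS b. -/

import Mathlib

namespace DLWFS

universe u

/-- Ground literals over a type `A` of atoms: atoms and their classical complements. -/
inductive Lit (A : Type u) : Type u where
  | pos : A → Lit A
  | neg : A → Lit A

/-- The classical complement `p̄` of a literal `p`. -/
def Lit.compl {A : Type u} : Lit A → Lit A
  | .pos a => .neg a
  | .neg a => .pos a

/-- The three kinds of rules of a defeasible theory. -/
inductive RuleKind : Type where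
  | strict
  | defeasible
  | defeater
deriving DecidableEq

/-- A rule of a defeasible theory: a kind, a body (a set of literals) and a head literal. -/
structure DRule (A : Type u) where
  kind : RuleKind
  body : Set (Lit A)
  head : Lit A

/-- A defeasible theory `D = ⟨R, C, ≺⟩`. -/
structure DTheory (A : Type u) where
  rules : Set (DRule A)
  conflicts : Set (Set (Lit A))
  prec : DRule A → DRule A → Prop

namespace DTheory

variable {A : Type u}

/-- The strict rules `R_s`. -/
def Rs (D : DTheory A) : Set (DRule A) := {r ∈ D.rules | r.kind = RuleKind.strict}

/-- The defeasible rules `R_d`. -/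
def Rd (D : DTheory A) : Set (DRule A) := {r ∈ D.rules | r.kind = RuleKind.defeasible}

/-- The defeater rules `R_u`. -/
def Ru (D : DTheory A) : Set (DRule A) := {r ∈ D.rules | r.kind = RuleKind.defeater}

/-- `C[p]`: the conflict sets containing literal `p`. -/
def Cset (D : DTheory A) (p : Lit A) : Set (Set (Lit A)) := {c ∈ D.conflicts | p ∈ c}

/-- Structural conditions in the definition of a defeasible theory: a countable set of
rules with finite bodies, a countable set of finite conflict sets containing every
minimal conflict set `{p, ¬p}`, and an acyclic priority relation over non-strict rules. -/
def WellFormed (D : DTheory A) : Prop :=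
  D.rules.Countable ∧ D.conflicts.Countable ∧
  (∀ r ∈ D.rules, r.body.Finite) ∧
  (∀ c ∈ D.conflicts, c.Finite) ∧
  (∀ p : A, ({Lit.pos p, Lit.neg p} : Set (Lit A)) ∈ D.conflicts) ∧
  (∀ r s, D.prec r s → r.kind ≠ RuleKind.strict ∧ s.kind ≠ RuleKind.strict) ∧
  (∀ r, ¬ Relation.TransGen D.prec r r)

/-- `C = C_MIN`: the conflict sets are exactly the minimal ones `{p, ¬p}`. -/
def MinimalConflicts (D : DTheory A) : Prop :=
  D.conflicts = {c | ∃ p : A, c = ({Lit.pos p, Lit.neg p} : Set (Lit A))}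

end DTheory

/-- A 3-valued interpretation: a pair `⟨T, F⟩` of sets. -/
abbrev Interp (L : Type u) : Type u := Set L × Set L

variable {A : Type u}

/-- `S` is ADL-unfounded with respect to theory `D` and interpretation `I = ⟨T, F⟩`. -/
def ADLUnfounded (D : DTheory A) (I : Interp (Lit A)) (S : Set (Lit A)) : Prop :=
  ∀ p ∈ S,
    (∀ r ∈ D.Rs, r.head = p → (r.body ∩ (I.2 ∪ S)).Nonempty) ∧
    (∀ r ∈ D.Rd, r.head = p →
      (r.body ∩ (I.2 ∪ S)).Nonempty ∨
      ∃ c ∈ D.conflicts, p ∈ c ∧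
        ∀ q ∈ c \ {p}, ∃ s ∈ D.rules, s.head = q ∧ s.body ⊆ I.1 ∧
          (D.prec r s ∨ s.kind = RuleKind.strict))

/-- `S` is NDL-unfounded with respect to theory `D` and interpretation `I = ⟨T, F⟩`. -/
def NDLUnfounded (D : DTheory A) (I : Interp (Lit A)) (S : Set (Lit A)) : Prop :=
  ∀ p ∈ S,
    (∀ r ∈ D.Rs, r.head = p → (r.body ∩ (I.2 ∪ S)).Nonempty) ∧
    (∀ r ∈ D.Rd, r.head = p →
      (r.body ∩ (I.2 ∪ S)).Nonempty ∨
      ∃ c ∈ D.conflicts, p ∈ c ∧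
        ∀ q ∈ c \ {p}, ∃ s ∈ D.rules, s.head = q ∧ s.body ⊆ I.1 ∧
          ¬ D.prec s r)

/-- `U_D(I)` for ADL: the union of all ADL-unfounded sets. -/
def UA (D : DTheory A) (I : Interp (Lit A)) : Set (Lit A) :=
  ⋃₀ {S | ADLUnfounded D I S}

/-- `U_D(I)` for NDL: the union of all NDL-unfounded sets. -/
def UN (D : DTheory A) (I : Interp (Lit A)) : Set (Lit A) :=
  ⋃₀ {S | NDLUnfounded D I S}

/-- `T_D(I)`: the literals having a witness of provability with respect to `I = ⟨T, F⟩`. -/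
def TD (D : DTheory A) (I : Interp (Lit A)) : Set (Lit A) :=
  {p | ∃ r ∈ D.rules, r.head = p ∧ r.body ⊆ I.1 ∧
    (r.kind = RuleKind.strict ∨
      (r.kind = RuleKind.defeasible ∧
        ∀ c ∈ D.conflicts, p ∈ c →
          ∃ q ∈ c \ {p}, ∀ s ∈ D.rules, s.head = q →
            (D.prec s r ∨ (s.body ∩ I.2).Nonempty)))}

/-- `W_D` for ADL. -/
def WA (D : DTheory A) (I : Interp (Lit A)) : Interp (Lit A) := (TD D I, UA D I)

/-- `W_D` for NDL. -/
def WN (D : DTheory A) (I : Interp (Lit A)) : Interp (Lit A) := (TD D I, UN D I)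

/-- `I` is the well-founded model for the operator `W`: the least fixpoint of `W`
(componentwise order). -/
def IsWFModel {L : Type u} (W : Interp L → Interp L) (I : Interp L) : Prop :=
  W I = I ∧ ∀ J, W J = J → I.1 ⊆ J.1 ∧ I.2 ⊆ J.2

/-- A rule of a normal logic program: `head ← pos, ∼neg`. -/
structure NRule (A : Type u) where
  head : A
  pos : Set A
  neg : Set A

/-- A normal logic program: a set of rules. -/
abbrev NProgram (A : Type u) : Type u := Set (NRule A)

/-- Structural conditions in the definition of a normal logic program: a countable
set of ground rules with finite bodies. -/
def NProgram.WellFormed (P : NProgram A) : Prop :=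
  P.Countable ∧ ∀ r ∈ P, r.pos.Finite ∧ r.neg.Finite

/-- The immediate consequence operator `T_Π` on 3-valued interpretations. -/
def TP (P : NProgram A) (I : Interp A) : Set A :=
  {a | ∃ r ∈ P, r.head = a ∧ r.pos ⊆ I.1 ∧ r.neg ⊆ I.2}

/-- `S` is an unfounded set of program `P` with respect to interpretation `I = ⟨T, F⟩`. -/
def PUnfounded (P : NProgram A) (I : Interp A) (S : Set A) : Prop :=
  ∀ p ∈ S, ∀ r ∈ P, r.head = p →
    (r.pos ∩ (I.2 ∪ S)).Nonempty ∨ (r.neg ∩ I.1).Nonempty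

/-- `U_Π(I)`: the greatest unfounded set (union of all unfounded sets). -/
def UP (P : NProgram A) (I : Interp A) : Set A :=
  ⋃₀ {S | PUnfounded P I S}

/-- `W_Π(I) = ⟨T_Π(I), U_Π(I)⟩`. -/
def WP (P : NProgram A) (I : Interp A) : Interp A := (TP P I, UP P I)

/-- Transfinite iteration of an operator `W` from `⊥`, taking suprema at limit ordinals. -/
noncomputable def iterW {α : Type*} [CompleteLattice α] (W : α → α) : Ordinal.{0} → α :=
  fun o =>
    Ordinal.limitRecOn (motive := fun _ => α) o ⊥ (fun _ ih => W ih)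
      (fun o' _ ih => ⨆ x : Set.Iio o', ih x.1 x.2)

/-- One step of the immediate consequence operator for a set of defeasible-theory rules. -/
def TRstep (R : Set (DRule A)) (S : Set (Lit A)) : Set (Lit A) :=
  {p | ∃ r ∈ R, r.head = p ∧ r.body ⊆ S}

/-- The finite iterates `T_R ↑ n`. -/
def TRiter (R : Set (DRule A)) : ℕ → Set (Lit A)
  | 0 => ∅
  | n + 1 => TRstep R (TRiter R n)

/-- `Cl(R) = T_R ↑ ω`. -/
def ClR (R : Set (DRule A)) : Set (Lit A) := ⋃ n, TRiter R n

/-- The `α`-reduct `D_α^S` of a defeasible theory. -/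
def alphaReduct (D : DTheory A) (S : Set (Lit A)) : Set (DRule A) :=
  D.Rs ∪ {r ∈ D.Rd | ∀ c ∈ D.conflicts, r.head ∈ c → ∃ q ∈ c \ {r.head}, q ∉ S}

/-- The ambiguity-propagating operator `α_D(S) = Cl(D_α^S)`. -/
def alphaOp (D : DTheory A) (S : Set (Lit A)) : Set (Lit A) := ClR (alphaReduct D S)

/-- The `β`-reduct `D_β^S` of a defeasible theory. -/
def betaReduct (D : DTheory A) (S : Set (Lit A)) : Set (DRule A) :=
  D.Rs ∪ {r ∈ D.Rd | ∀ c ∈ D.conflicts, r.head ∈ c →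
    ∃ q ∈ c \ {r.head}, ∀ s ∈ D.rules, s.head = q → (¬ s.body ⊆ S ∨ D.prec s r)}

/-- The ambiguity-blocking operator `β_D(S) = Cl(D_β^S)`. -/
def betaOp (D : DTheory A) (S : Set (Lit A)) : Set (Lit A) := ClR (betaReduct D S)

/-- `S` is an `α`-stable set of `D`. -/
def AlphaStable (D : DTheory A) (S : Set (Lit A)) : Prop := alphaOp D S = S

/-- `S` is a `β`-stable set of `D`. -/
def BetaStable (D : DTheory A) (S : Set (Lit A)) : Prop := betaOp D S = S

/-- The sequence `X_D↑λ`: `X↑0 = ∅`, `X↑(λ+1) = β_D(β_D(X↑λ))`, unions at limits. -/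
noncomputable def Xseq (D : DTheory A) : Ordinal.{0} → Set (Lit A) :=
  iterW (fun S => betaOp D (betaOp D S))

/-- The Gelfond–Lifschitz reduct `Π^S`. -/
def glReduct (P : NProgram A) (S : Set A) : NProgram A :=
  {r' | ∃ r ∈ P, r.neg ∩ S = ∅ ∧ r' = NRule.mk r.head r.pos ∅}

/-- One step of the immediate consequence operator for a NAF-free program. -/
def TPstep (P : NProgram A) (S : Set A) : Set A :=
  {a | ∃ r ∈ P, r.head = a ∧ r.pos ⊆ S}

/-- The finite iterates `T_Π ↑ n` of a NAF-free program. -/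
def TPiter (P : NProgram A) : ℕ → Set A
  | 0 => ∅
  | n + 1 => TPstep P (TPiter P n)

/-- `Cl(Π) = T_Π ↑ ω`. -/
def ClP (P : NProgram A) : Set A := ⋃ n, TPiter P n

/-- The Gelfond–Lifschitz operator `γ_Π(S) = Cl(Π^S)`. -/
def gamma (P : NProgram A) (S : Set A) : Set A := ClP (glReduct P S)

/-- `S` is a stable model of `P`. -/
def StableModel (P : NProgram A) (S : Set A) : Prop := gamma P S = S

/-- `Prod(C[p])`: all sets obtained by choosing one literal other than `p` from each
conflict set containing `p`. -/
def ProdC (D : DTheory A) (p : Lit A) : Set (Set (Lit A)) :=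
  {Q | ∃ f : Set (Lit A) → Lit A,
    (∀ c ∈ D.conflicts, p ∈ c → f c ∈ c \ {p}) ∧
    Q = f '' {c ∈ D.conflicts | p ∈ c}}

/-- The logic program translation `Π_D` of a defeasible theory `D` (negative literals
are treated as fresh atoms, so the atoms of the program are the literals of `D`). -/
def lpTrans (D : DTheory A) : NProgram (Lit A) :=
  {r' | ∃ r ∈ D.Rs, r' = NRule.mk r.head r.body ∅} ∪
  {r' | ∃ r ∈ D.Rd, ∃ Q ∈ ProdC D r.head, r' = NRule.mk r.head r.body Q}

/-- The explicit version `Φ` of a normal program `Π`: atoms of `Φ` are the literals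
over the atoms of `Π` (`¬p` being a fresh atom). -/
def explicitVer (P : NProgram A) : NProgram (Lit A) :=
  {r' | ∃ r ∈ P, r' = NRule.mk (Lit.pos r.head) (Lit.pos '' r.pos ∪ Lit.neg '' r.neg) ∅} ∪
  {r' | ∃ p : A, r' = NRule.mk (Lit.neg p) ∅ {Lit.pos p}}

/-- The minimal conflict sets over atom type `A`. -/
def CMin (A : Type u) : Set (Set (Lit A)) :=
  {c | ∃ p : A, c = ({Lit.pos p, Lit.neg p} : Set (Lit A))}

/-- The defeasible theory translation `D_Π` of a normal program `Π`: each program rule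
becomes a strict rule (default literals `∼b` becoming negative literals `¬b`), and each
atom `p` yields a presumption `∅ ⇒ ¬p`; conflict sets are minimal and `≺` is empty. -/
def dtTrans (P : NProgram A) : DTheory A :=
  { rules :=
      {e | ∃ r ∈ P, e = DRule.mk RuleKind.strict
            (Lit.pos '' r.pos ∪ Lit.neg '' r.neg) (Lit.pos r.head)} ∪
      {e | ∃ p : A, e = DRule.mk RuleKind.defeasible ∅ (Lit.neg p)}
    conflicts := CMin A
    prec := fun _ _ => False }

/-- `M^¬ = M ∪ {¬p : p ∉ M}`, atoms being identified with positive literals. -/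
def negCompl (M : Set A) : Set (Lit A) :=
  Lit.pos '' M ∪ Lit.neg '' {p | p ∉ M}

end DLWFS


/-!
Lifting `⟨T, F⟩` to `⟨T ∪ ¬F, F ∪ ¬T⟩` sends fixpoints of `W_Π` to fixpoints of `W_Φ`, and
restricting to positive literals sends fixpoints of `W_Φ` back to fixpoints of `W_Π`; both maps
preserve the status of every atom. The point is that `¬p ← ∼p` is the only rule for `¬p`, so in
every fixpoint of `W_Φ` the literal `¬p` is true exactly when `p` is false, and false exactly when
`p` is true: a body literal `¬b` of `Φ` behaves like `∼b` in `Π`. Minimality of the two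
well-founded models then yields the inclusions in both directions.
-/

namespace DLWFS

section Program

variable {A : Type*} {P : NProgram A} {I : Interp A}

theorem PUnfounded.subset_UP {S : Set A} (h : PUnfounded P I S) : S ⊆ UP P I :=
  Set.subset_sUnion_of_mem h

theorem pUnfounded_UP : PUnfounded P I (UP P I) := by
  rintro p ⟨S, hS, hpS⟩ r hr rfl
  rcases hS _ hpS r hr rfl with ⟨q, hq, hqF | hqS⟩ | hneg
  · exact Or.inl ⟨q, hq, Or.inl hqF⟩
  · exact Or.inl ⟨q, hq, Or.inr (hS.subset_UP hqS)⟩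
  · exact Or.inr hneg

theorem WP_eq_self_iff : WP P I = I ↔ TP P I = I.1 ∧ UP P I = I.2 :=
  Prod.ext_iff

end Program

section ExplicitVersion

variable {A : Type*} {P : NProgram A}

theorem pos_mem_TP_explicitVer {J : Interp (Lit A)} {a : A} :
    Lit.pos a ∈ TP (explicitVer P) J ↔ ∃ r ∈ P, r.head = a ∧
      (∀ q ∈ r.pos, Lit.pos q ∈ J.1) ∧ ∀ q ∈ r.neg, Lit.neg q ∈ J.1 := by
  constructor
  · rintro ⟨_, ⟨r, hr, rfl⟩ | ⟨p, rfl⟩, hhead, hbody, -⟩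
    · cases hhead
      exact ⟨r, hr, rfl, fun q hq => hbody (Or.inl ⟨q, hq, rfl⟩),
        fun q hq => hbody (Or.inr ⟨q, hq, rfl⟩)⟩
    · cases hhead
  · rintro ⟨r, hr, rfl, hpos, hneg⟩
    refine ⟨_, Or.inl ⟨r, hr, rfl⟩, rfl, ?_, Set.empty_subset _⟩
    rintro _ (⟨q, hq, rfl⟩ | ⟨q, hq, rfl⟩)
    exacts [hpos q hq, hneg q hq]

theorem neg_mem_TP_explicitVer {J : Interp (Lit A)} {a : A} :
    Lit.neg a ∈ TP (explicitVer P) J ↔ Lit.pos a ∈ J.2 := by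
  constructor
  · rintro ⟨_, ⟨r, -, rfl⟩ | ⟨p, rfl⟩, hhead, -, hneg⟩
    · cases hhead
    · cases hhead
      exact hneg rfl
  · intro ha
    exact ⟨_, Or.inr ⟨a, rfl⟩, rfl, Set.empty_subset _, Set.singleton_subset_iff.mpr ha⟩

theorem pUnfounded_explicitVer_iff {J : Interp (Lit A)} {S : Set (Lit A)} :
    PUnfounded (explicitVer P) J S ↔
      (∀ r ∈ P, Lit.pos r.head ∈ S →
        (∃ q ∈ r.pos, Lit.pos q ∈ J.2 ∪ S) ∨ ∃ q ∈ r.neg, Lit.neg q ∈ J.2 ∪ S) ∧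
      ∀ a, Lit.neg a ∈ S → Lit.pos a ∈ J.1 := by
  constructor
  · intro hS
    constructor
    · intro r hr hrS
      rcases hS _ hrS _ (Or.inl ⟨r, hr, rfl⟩) rfl with
        ⟨_, ⟨q, hq, rfl⟩ | ⟨q, hq, rfl⟩, hqS⟩ | ⟨_, hq, -⟩
      exacts [Or.inl ⟨q, hq, hqS⟩, Or.inr ⟨q, hq, hqS⟩, absurd hq (Set.notMem_empty _)]
    · intro a haS
      rcases hS _ haS _ (Or.inr ⟨a, rfl⟩) rfl with ⟨_, hq, -⟩ | ⟨_, rfl, hqT⟩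
      exacts [absurd hq (Set.notMem_empty _), hqT]
  · rintro ⟨hpos, hneg⟩ p hp _ (⟨r, hr, rfl⟩ | ⟨a, rfl⟩) rfl
    · rcases hpos r hr hp with ⟨q, hq, hqS⟩ | ⟨q, hq, hqS⟩
      exacts [Or.inl ⟨_, Or.inl ⟨q, hq, rfl⟩, hqS⟩, Or.inl ⟨_, Or.inr ⟨q, hq, rfl⟩, hqS⟩]
    · exact Or.inr ⟨_, rfl, hneg a hp⟩

theorem pos_mem_fst_of_neg_mem_UP {J : Interp (Lit A)} {a : A}
    (h : Lit.neg a ∈ UP (explicitVer P) J) : Lit.pos a ∈ J.1 :=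
  (pUnfounded_explicitVer_iff.mp pUnfounded_UP).2 a h

end ExplicitVersion

section Transfer

variable {A : Type*} {P : NProgram A}

def liftInterp (I : Interp A) : Interp (Lit A) :=
  (Lit.pos '' I.1 ∪ Lit.neg '' I.2, Lit.pos '' I.2 ∪ Lit.neg '' I.1)

def projInterp (J : Interp (Lit A)) : Interp A :=
  ({b | Lit.pos b ∈ J.1}, {b | Lit.pos b ∈ J.2})

theorem TP_explicitVer_liftInterp {I : Interp A} (hT : TP P I = I.1) :
    TP (explicitVer P) (liftInterp I) = (liftInterp I).1 := by
  ext (a | a)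
  · have ha : Lit.pos a ∈ (liftInterp I).1 ↔ a ∈ TP P I := by
      rw [hT]; simp [liftInterp]
    rw [ha, pos_mem_TP_explicitVer]
    simp [liftInterp, TP, Set.subset_def]
  · simp [neg_mem_TP_explicitVer, liftInterp]

theorem UP_explicitVer_liftInterp {I : Interp A} (hF : UP P I = I.2) :
    UP (explicitVer P) (liftInterp I) = (liftInterp I).2 := by
  refine Set.Subset.antisymm ?_ (PUnfounded.subset_UP ?_)
  · rintro (a | a) ⟨S, hS, haS⟩ <;> obtain ⟨hpos, hneg⟩ := pUnfounded_explicitVer_iff.mp hS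
    · suffices a ∈ UP P I by simpa [liftInterp, hF] using this
      refine PUnfounded.subset_UP (S := {b | Lit.pos b ∈ S}) ?_ haS
      rintro b hb r hr rfl
      rcases hpos r hr hb with ⟨q, hq, hqF | hqS⟩ | ⟨q, hq, hqF | hqS⟩
      · exact Or.inl ⟨q, hq, Or.inl (by simpa [liftInterp] using hqF)⟩
      · exact Or.inl ⟨q, hq, Or.inr hqS⟩
      · exact Or.inr ⟨q, hq, by simpa [liftInterp] using hqF⟩
      · exact Or.inr ⟨q, hq, by simpa [liftInterp] using hneg q hqS⟩
    · simpa [liftInterp] using hneg a haS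
  · have hU : PUnfounded P I I.2 := hF ▸ pUnfounded_UP
    rw [pUnfounded_explicitVer_iff]
    refine ⟨fun r hr hrF => ?_, fun a ha => by simpa [liftInterp] using ha⟩
    rcases hU r.head (by simpa [liftInterp] using hrF) r hr rfl with
      ⟨q, hq, hqF | hqF⟩ | ⟨q, hq, hqT⟩
    · exact Or.inl ⟨q, hq, Or.inl (by simpa [liftInterp] using hqF)⟩
    · exact Or.inl ⟨q, hq, Or.inl (by simpa [liftInterp] using hqF)⟩
    · exact Or.inr ⟨q, hq, Or.inl (by simpa [liftInterp] using hqT)⟩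

theorem WP_explicitVer_liftInterp {I : Interp A} (h : WP P I = I) :
    WP (explicitVer P) (liftInterp I) = liftInterp I :=
  let ⟨hT, hF⟩ := WP_eq_self_iff.mp h
  WP_eq_self_iff.mpr ⟨TP_explicitVer_liftInterp hT, UP_explicitVer_liftInterp hF⟩

variable {J : Interp (Lit A)}

theorem neg_mem_snd_iff (hF : UP (explicitVer P) J = J.2) {a : A} :
    Lit.neg a ∈ J.2 ↔ Lit.pos a ∈ J.1 := by
  refine ⟨fun h => pos_mem_fst_of_neg_mem_UP (hF ▸ h), fun h => hF ▸ ?_⟩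
  refine PUnfounded.subset_UP (S := {Lit.neg a}) ?_ rfl
  refine pUnfounded_explicitVer_iff.mpr ⟨fun r _ hr => ?_, fun b hb => ?_⟩
  · cases hr
  · cases hb
    exact h

theorem neg_mem_fst_iff (hT : TP (explicitVer P) J = J.1) {a : A} :
    Lit.neg a ∈ J.1 ↔ Lit.pos a ∈ J.2 := by
  rw [← hT, neg_mem_TP_explicitVer]

theorem TP_projInterp (hT : TP (explicitVer P) J = J.1) :
    TP P (projInterp J) = (projInterp J).1 := by
  ext b
  change _ ↔ Lit.pos b ∈ J.1
  rw [← hT, pos_mem_TP_explicitVer]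
  simp_rw [neg_mem_fst_iff hT]
  rfl

theorem UP_projInterp (hF : UP (explicitVer P) J = J.2) :
    UP P (projInterp J) = (projInterp J).2 := by
  refine Set.Subset.antisymm (fun b ⟨S, hS, hbS⟩ => ?_) (PUnfounded.subset_UP ?_)
  · suffices Lit.pos '' S ⊆ UP (explicitVer P) J from
      (hF ▸ this ⟨b, hbS, rfl⟩ : Lit.pos b ∈ J.2)
    refine PUnfounded.subset_UP (pUnfounded_explicitVer_iff.mpr ⟨?_, by simp⟩)
    rintro r hr ⟨a, haS, hhead⟩
    cases hhead
    rcases hS _ haS r hr rfl with ⟨q, hq, hqF | hqS⟩ | ⟨q, hq, hqT⟩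
    · exact Or.inl ⟨q, hq, Or.inl hqF⟩
    · exact Or.inl ⟨q, hq, Or.inr ⟨q, hqS, rfl⟩⟩
    · exact Or.inr ⟨q, hq, Or.inl ((neg_mem_snd_iff hF).mpr hqT)⟩
  · have hU : PUnfounded (explicitVer P) J J.2 := hF ▸ pUnfounded_UP
    rintro b hb r hr rfl
    rcases (pUnfounded_explicitVer_iff.mp hU).1 r hr hb with
      ⟨q, hq, hqF | hqF⟩ | ⟨q, hq, hqF | hqF⟩
    · exact Or.inl ⟨q, hq, Or.inl hqF⟩
    · exact Or.inl ⟨q, hq, Or.inl hqF⟩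
    · exact Or.inr ⟨q, hq, (neg_mem_snd_iff hF).mp hqF⟩
    · exact Or.inr ⟨q, hq, (neg_mem_snd_iff hF).mp hqF⟩

theorem WP_projInterp (h : WP (explicitVer P) J = J) : WP P (projInterp J) = projInterp J :=
  let ⟨hT, hF⟩ := WP_eq_self_iff.mp h
  WP_eq_self_iff.mpr ⟨TP_projInterp hT, UP_projInterp hF⟩

end Transfer

theorem explicit_version_wfs_general {A : Type*} (P : NProgram A)
    (IP : Interp A) (hIP : IsWFModel (WP P) IP)
    (IPhi : Interp (Lit A)) (hIPhi : IsWFModel (WP (explicitVer P)) IPhi) :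
    ∀ b : A, (b ∈ IP.1 ↔ Lit.pos b ∈ IPhi.1) ∧ (b ∈ IP.2 ↔ Lit.pos b ∈ IPhi.2) := by
  intro b
  have hIP_le := hIP.2 _ (WP_projInterp hIPhi.1)
  have hIPhi_le := hIPhi.2 _ (WP_explicitVer_liftInterp hIP.1)
  refine ⟨⟨fun h => hIP_le.1 h, fun h => ?_⟩, ⟨fun h => hIP_le.2 h, fun h => ?_⟩⟩
  · simpa [liftInterp] using hIPhi_le.1 h
  · simpa [liftInterp] using hIPhi_le.2 h

/-- Let `Π` be a normal program and `Φ` its explicit version. For every atom `b`: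
`Π ⊨_WFS b` iff `Φ ⊨_WFS b`, and `Π ⊣_WFS b` iff `Φ ⊣_WFS b`. -/
theorem explicit_version_wfs {A : Type*} (P : NProgram A) (hwf : P.WellFormed)
    (IP : Interp A) (hIP : IsWFModel (WP P) IP)
    (IPhi : Interp (Lit A)) (hIPhi : IsWFModel (WP (explicitVer P)) IPhi) :
    ∀ b : A, (b ∈ IP.1 ↔ Lit.pos b ∈ IPhi.1) ∧ (b ∈ IP.2 ↔ Lit.pos b ∈ IPhi.2) :=
  explicit_version_wfs_general P IP hIP IPhi hIPhi

end DLWFS
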